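/- arXiv:2101.11378 — 6 statements merged into one kernel-verified Lean document; each statement's English description precedes it below -/
import Mathlib

section
/- Let N ≥ 2 be an integer and let b₀, b₁, …, b_{N-2} be real numbers such that b₀ > 0 and b_k < 0 for 1 ≤ k ≤ N-2, and suppose there exists C₀ > 0 such that ∑_{j=1}^{N-1} b_{|i-j|} > C₀ for every i ∈ {1, …, N-1}. Let B₁ be the (N-1)×(N-1) symmetric Toeplitz matrix with entries (B₁)_{i,j} = b_{|i-j|}, and let U, U_h, G, F ∈ ℝ^{N-1} satisfy B₁ U_h + G = F. Then ‖U - U_h‖₂ ≤ C₀⁻¹ ‖F - (B₁ U + G)‖₂, where ‖·‖₂ is the Euclidean norm. -/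
/-
Write `x = U - U_h`. Since `B₁ U_h + G = F`, the residual `F - (B₁ U + G)` is `-B₁ x`. As `B₁` is
symmetric with nonpositive off-diagonal entries, `x ⬝ B₁ x ≥ ∑ᵢ (row sum)ᵢ xᵢ² ≥ C₀ ‖x‖²`, and
Cauchy–Schwarz bounds the left side by `‖B₁ x‖ ‖x‖`, so `‖x‖ ≤ C₀⁻¹ ‖B₁ x‖`.
-/

open Matrix Finset WithLp

theorem Matrix.sum_rowSum_mul_sq_le_dotProduct_mulVec {ι : Type*} [Fintype ι]
    {A : Matrix ι ι ℝ} (hA : A.IsSymm) (hoff : ∀ i j, i ≠ j → A i j ≤ 0) (x : ι → ℝ) :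
    ∑ i, (∑ j, A i j) * x i ^ 2 ≤ x ⬝ᵥ A *ᵥ x := by
  -- Symmetry turns the gap into `-½ ∑ᵢⱼ Aᵢⱼ (xᵢ - xⱼ)²`, a sum of nonnegative terms.
  have hswap : ∑ i, ∑ j, A i j * x j ^ 2 = ∑ i, ∑ j, A i j * x i ^ 2 := by
    rw [Finset.sum_comm]
    exact sum_congr rfl fun j _ => sum_congr rfl fun i _ => by rw [hA.apply]
  have hgap : 0 ≤ ∑ i, ∑ j, -A i j * (x i - x j) ^ 2 := by
    refine sum_nonneg fun i _ => sum_nonneg fun j _ => ?_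
    rcases eq_or_ne i j with rfl | hij
    · simp
    · exact mul_nonneg (neg_nonneg.2 (hoff i j hij)) (sq_nonneg _)
  have hexpand : ∑ i, ∑ j, -A i j * (x i - x j) ^ 2 =
      2 * (x ⬝ᵥ A *ᵥ x) - ∑ i, ∑ j, A i j * x i ^ 2 - ∑ i, ∑ j, A i j * x j ^ 2 := by
    simp only [dotProduct, mulVec, mul_sum, ← sum_sub_distrib]
    exact sum_congr rfl fun i _ => sum_congr rfl fun j _ => by ring
  have hrow : ∑ i, (∑ j, A i j) * x i ^ 2 = ∑ i, ∑ j, A i j * x i ^ 2 := by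
    simp only [sum_mul]
  linarith

theorem norm_le_inv_mul_norm_of_mul_norm_sq_le_inner {E : Type*} [NormedAddCommGroup E]
    [InnerProductSpace ℝ E] {c : ℝ} (hc : 0 < c) {x y : E}
    (h : c * ‖x‖ ^ 2 ≤ inner ℝ y x) : ‖x‖ ≤ c⁻¹ * ‖y‖ := by
  rw [le_inv_mul_iff₀ hc]
  rcases (norm_nonneg x).eq_or_lt with hx | hx
  · rw [← hx, mul_zero]
    exact norm_nonneg y
  · refine le_of_mul_le_mul_right ?_ hx
    calc c * ‖x‖ * ‖x‖ = c * ‖x‖ ^ 2 := by ring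
      _ ≤ inner ℝ y x := h
      _ ≤ ‖y‖ * ‖x‖ := real_inner_le_norm y x

theorem Matrix.isSymm_of_apply_eq_natAbs_sub {n : ℕ} {B : Matrix (Fin n) (Fin n) ℝ}
    {b : ℕ → ℝ} (hB : ∀ i j : Fin n, B i j = b ((i : ℤ) - (j : ℤ)).natAbs) : B.IsSymm := by
  refine Matrix.IsSymm.ext fun i j => ?_
  rw [hB, hB, ← Int.natAbs_neg, neg_sub]

theorem Matrix.apply_nonpos_of_apply_eq_natAbs_sub {n : ℕ} {B : Matrix (Fin n) (Fin n) ℝ}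
    {b : ℕ → ℝ} (hB : ∀ i j : Fin n, B i j = b ((i : ℤ) - (j : ℤ)).natAbs)
    (hb : ∀ k, 1 ≤ k → k < n → b k ≤ 0) {i j : Fin n} (hij : i ≠ j) : B i j ≤ 0 := by
  have := Fin.val_ne_of_ne hij
  rw [hB]
  apply hb <;> omega

theorem Matrix.norm_le_inv_mul_norm_mulVec {ι : Type*} [Fintype ι] {A : Matrix ι ι ℝ}
    (hA : A.IsSymm) (hoff : ∀ i j, i ≠ j → A i j ≤ 0) {c : ℝ} (hc : 0 < c)
    (hrow : ∀ i, c ≤ ∑ j, A i j) (x : EuclideanSpace ℝ ι) :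
    ‖x‖ ≤ c⁻¹ * ‖toLp 2 (A *ᵥ x)‖ := by
  refine norm_le_inv_mul_norm_of_mul_norm_sq_le_inner hc ?_
  calc c * ‖x‖ ^ 2 = ∑ i, c * x i ^ 2 := by rw [EuclideanSpace.real_norm_sq_eq, mul_sum]
    _ ≤ ∑ i, (∑ j, A i j) * x i ^ 2 :=
      sum_le_sum fun i _ => mul_le_mul_of_nonneg_right (hrow i) (sq_nonneg _)
    _ ≤ ofLp x ⬝ᵥ A *ᵥ ofLp x := sum_rowSum_mul_sq_le_dotProduct_mulVec hA hoff x
    _ = inner ℝ (toLp 2 (A *ᵥ x)) x := by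
      rw [EuclideanSpace.inner_toLp_toLp]
      simp

theorem stmt1_general (N : ℕ) (b : ℕ → ℝ)
    (hbneg : ∀ k : ℕ, 1 ≤ k → k ≤ N - 2 → b k < 0)
    (C₀ : ℝ) (hC₀ : 0 < C₀)
    (B₁ : Matrix (Fin (N - 1)) (Fin (N - 1)) ℝ)
    (hB₁ : ∀ i j : Fin (N - 1), B₁ i j = b ((i : ℤ) - (j : ℤ)).natAbs)
    (hrow : ∀ i : Fin (N - 1), C₀ < ∑ j : Fin (N - 1), b ((i : ℤ) - (j : ℤ)).natAbs)
    (U Uh G F : Fin (N - 1) → ℝ)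
    (hsys : B₁.mulVec Uh + G = F) :
    Real.sqrt (∑ i, (U i - Uh i) ^ 2)
      ≤ C₀⁻¹ * Real.sqrt (∑ i, (F i - (B₁.mulVec U + G) i) ^ 2) := by
  have hoff : ∀ i j, i ≠ j → B₁ i j ≤ 0 := fun i j =>
    apply_nonpos_of_apply_eq_natAbs_sub hB₁ fun k hk1 hk2 => (hbneg k hk1 (by omega)).le
  have hrowB : ∀ i, C₀ ≤ ∑ j, B₁ i j := fun i => by simpa only [hB₁] using (hrow i).le
  have hres : ∀ i, F i - (B₁ *ᵥ U + G) i = -(B₁ *ᵥ (U - Uh)) i := by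
    rw [← hsys, mulVec_sub]
    simp
  simp only [hres, neg_sq]
  simpa [EuclideanSpace.norm_eq] using norm_le_inv_mul_norm_mulVec
    (isSymm_of_apply_eq_natAbs_sub hB₁) hoff hC₀ hrowB (toLp 2 (U - Uh))

/-- For the symmetric Toeplitz matrix `B₁` with entries `b_{|i-j|}`,
`b₀ > 0`, `b_k < 0` for `1 ≤ k ≤ N-2`, and row sums `> C₀ > 0`, if `B₁ U_h + G = F`
then `‖U - U_h‖₂ ≤ C₀⁻¹ ‖F - (B₁ U + G)‖₂` in the Euclidean norm. -/
theorem stmt1 (N : ℕ) (hN : 2 ≤ N) (b : ℕ → ℝ)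
    (hb0 : 0 < b 0)
    (hbneg : ∀ k : ℕ, 1 ≤ k → k ≤ N - 2 → b k < 0)
    (C₀ : ℝ) (hC₀ : 0 < C₀)
    (B₁ : Matrix (Fin (N - 1)) (Fin (N - 1)) ℝ)
    (hB₁ : ∀ i j : Fin (N - 1), B₁ i j = b ((i : ℤ) - (j : ℤ)).natAbs)
    (hrow : ∀ i : Fin (N - 1), C₀ < ∑ j : Fin (N - 1), b ((i : ℤ) - (j : ℤ)).natAbs)
    (U Uh G F : Fin (N - 1) → ℝ)
    (hsys : B₁.mulVec Uh + G = F) :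
    Real.sqrt (∑ i, (U i - Uh i) ^ 2)
      ≤ C₀⁻¹ * Real.sqrt (∑ i, (F i - (B₁.mulVec U + G) i) ^ 2) :=
  stmt1_general N b hbneg C₀ hC₀ B₁ hB₁ hrow U Uh G F hsys
end

section
/- Let N ≥ 2 be an integer and let b₀, b₁, …, b_{N-2} be real numbers such that b₀ > 0 and b_k < 0 for 1 ≤ k ≤ N-2, and suppose there exists C₀ > 0 such that ∑_{j=1}^{N-1} b_{|i-j|} > C₀ for every i ∈ {1, …, N-1}. Let B₁ be the (N-1)×(N-1) symmetric Toeplitz matrix with entries (B₁)_{i,j} = b_{|i-j|}, and let U, U_h, G, F ∈ ℝ^{N-1} satisfy B₁ U_h + G = F. Then ‖U - U_h‖_∞ ≤ C₀⁻¹ ‖F - (B₁ U + G)‖_∞, where ‖x‖_∞ = max_i |x_i|. -/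
open Matrix

/-- For the symmetric Toeplitz matrix `B₁` with entries `b_{|i-j|}`,
`b₀ > 0`, `b_k < 0` for `1 ≤ k ≤ N-2`, and row sums `> C₀ > 0`, if `B₁ U_h + G = F`
then `‖U - U_h‖_∞ ≤ C₀⁻¹ ‖F - (B₁ U + G)‖_∞` in the maximum norm. -/
theorem stmt2 (N : ℕ) (hN : 2 ≤ N) (b : ℕ → ℝ)
    (hb0 : 0 < b 0)
    (hbneg : ∀ k : ℕ, 1 ≤ k → k ≤ N - 2 → b k < 0)
    (C₀ : ℝ) (hC₀ : 0 < C₀)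
    (B₁ : Matrix (Fin (N - 1)) (Fin (N - 1)) ℝ)
    (hB₁ : ∀ i j : Fin (N - 1), B₁ i j = b ((i : ℤ) - (j : ℤ)).natAbs)
    (hrow : ∀ i : Fin (N - 1), C₀ < ∑ j : Fin (N - 1), b ((i : ℤ) - (j : ℤ)).natAbs)
    (U Uh G F : Fin (N - 1) → ℝ)
    (hsys : B₁.mulVec Uh + G = F) :
    (⨆ i : Fin (N - 1), |U i - Uh i|)
      ≤ C₀⁻¹ * ⨆ i : Fin (N - 1), |F i - (B₁.mulVec U + G) i| := by
  have hn : 0 < N - 1 := by omega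
  haveI : Nonempty (Fin (N - 1)) := ⟨⟨0, hn⟩⟩
  set e : Fin (N - 1) → ℝ := fun i => U i - Uh i with he
  obtain ⟨i₀, -, hi₀⟩ := Finset.exists_max_image Finset.univ (fun i => |e i|)
    ⟨⟨0, hn⟩, Finset.mem_univ _⟩
  set M := |e i₀| with hM
  have hMle : ∀ i, |e i| ≤ M := fun i => hi₀ i (Finset.mem_univ i)
  have hM0 : 0 ≤ M := abs_nonneg _
  -- residual
  have hr : ∀ i, F i - (B₁.mulVec U + G) i = -(B₁.mulVec e) i := by
    intro i
    have h1 := congrFun hsys i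
    simp only [Pi.add_apply] at h1 ⊢
    have h2 : B₁.mulVec e i = B₁.mulVec U i - B₁.mulVec Uh i := by
      simp only [Matrix.mulVec, dotProduct, he]
      rw [← Finset.sum_sub_distrib]
      exact Finset.sum_congr rfl fun j _ => by ring
    rw [h2, ← h1]; ring
  -- key estimate
  have key : C₀ * M ≤ |B₁.mulVec e i₀| := by
    have hsplit : B₁.mulVec e i₀
        = B₁ i₀ i₀ * e i₀ + ∑ j ∈ Finset.univ.erase i₀, B₁ i₀ j * e j := by
      simp only [Matrix.mulVec, dotProduct]
      exact (Finset.add_sum_erase Finset.univ (fun j => B₁ i₀ j * e j)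
        (Finset.mem_univ i₀)).symm
    have hoff : ∀ j ∈ Finset.univ.erase i₀, |B₁ i₀ j * e j| ≤ (-B₁ i₀ j) * M := by
      intro j hj
      have hji : j ≠ i₀ := (Finset.mem_erase.mp hj).1
      have hk1 : 1 ≤ (((i₀ : ℤ) - (j : ℤ)).natAbs) := by
        have : (i₀ : ℤ) ≠ (j : ℤ) := by
          simpa using fun h => hji (Fin.ext (by exact_mod_cast h)).symm
        omega
      have hk2 : (((i₀ : ℤ) - (j : ℤ)).natAbs) ≤ N - 2 := by
        have h1 : (i₀ : ℕ) < N - 1 := i₀.isLt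
        have h2 : (j : ℕ) < N - 1 := j.isLt
        have h3 : ((i₀ : Fin (N-1)) : ℤ) = ((i₀ : ℕ) : ℤ) := rfl
        omega
      have hbneg' : B₁ i₀ j < 0 := by rw [hB₁]; exact hbneg _ hk1 hk2
      rw [abs_mul, abs_of_neg hbneg']
      exact mul_le_mul_of_nonneg_left (hMle j) (by linarith)
    have habs : b 0 * M - ∑ j ∈ Finset.univ.erase i₀, (-B₁ i₀ j) * M
        ≤ |B₁.mulVec e i₀| := by
      have h1 : |B₁ i₀ i₀ * e i₀| = b 0 * M := by
        rw [abs_mul, abs_of_pos (show (0:ℝ) < B₁ i₀ i₀ by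
          rw [hB₁]; simpa using hb0)]
        rw [hB₁]; simp [hM]
      have h2 : |∑ j ∈ Finset.univ.erase i₀, B₁ i₀ j * e j|
          ≤ ∑ j ∈ Finset.univ.erase i₀, (-B₁ i₀ j) * M :=
        (Finset.abs_sum_le_sum_abs _ _).trans (Finset.sum_le_sum hoff)
      calc b 0 * M - ∑ j ∈ Finset.univ.erase i₀, (-B₁ i₀ j) * M
          ≤ |B₁ i₀ i₀ * e i₀| - |∑ j ∈ Finset.univ.erase i₀, B₁ i₀ j * e j| := by
            rw [h1]; linarith
        _ ≤ |B₁ i₀ i₀ * e i₀ + ∑ j ∈ Finset.univ.erase i₀, B₁ i₀ j * e j| := by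
            have h := abs_add_le (B₁ i₀ i₀ * e i₀ + ∑ j ∈ Finset.univ.erase i₀, B₁ i₀ j * e j)
              (-(∑ j ∈ Finset.univ.erase i₀, B₁ i₀ j * e j))
            simp only [add_neg_cancel_right, abs_neg] at h
            linarith
        _ = |B₁.mulVec e i₀| := by rw [hsplit]
    have hsum : b 0 * M - ∑ j ∈ Finset.univ.erase i₀, (-B₁ i₀ j) * M
        = (∑ j, B₁ i₀ j) * M := by
      rw [← Finset.add_sum_erase Finset.univ (fun j => B₁ i₀ j) (Finset.mem_univ i₀)]
      have : B₁ i₀ i₀ = b 0 := by rw [hB₁]; simp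
      rw [this, add_mul, Finset.sum_mul]
      have h3 : ∑ j ∈ Finset.univ.erase i₀, -B₁ i₀ j * M
          = -∑ j ∈ Finset.univ.erase i₀, B₁ i₀ j * M := by
        simp [neg_mul]
      linarith
    have hrowsum : C₀ ≤ ∑ j, B₁ i₀ j := by
      have := hrow i₀
      have heq : (∑ j, B₁ i₀ j) = ∑ j : Fin (N-1), b ((i₀ : ℤ) - (j : ℤ)).natAbs :=
        Finset.sum_congr rfl fun j _ => hB₁ i₀ j
      linarith
    calc C₀ * M ≤ (∑ j, B₁ i₀ j) * M := mul_le_mul_of_nonneg_right hrowsum hM0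
      _ = b 0 * M - ∑ j ∈ Finset.univ.erase i₀, (-B₁ i₀ j) * M := hsum.symm
      _ ≤ |B₁.mulVec e i₀| := habs
  -- conclude
  have hMbound : M ≤ C₀⁻¹ * |F i₀ - (B₁.mulVec U + G) i₀| := by
    rw [hr i₀, abs_neg, inv_mul_eq_div, le_div_iff₀ hC₀]
    nlinarith [key]
  have hbdd : BddAbove (Set.range fun i => |F i - (B₁.mulVec U + G) i|) :=
    Set.Finite.bddAbove (Set.finite_range _)
  apply ciSup_le
  intro i
  calc |U i - Uh i| ≤ M := hMle i
    _ ≤ C₀⁻¹ * |F i₀ - (B₁.mulVec U + G) i₀| := hMbound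
    _ ≤ C₀⁻¹ * ⨆ i, |F i - (B₁.mulVec U + G) i| :=
        mul_le_mul_of_nonneg_left (le_ciSup hbdd i₀) (by positivity)
end

section
/- Let N ≥ 2 be an integer and let t_{k,l} (0 ≤ k, l ≤ N-2) be real numbers such that t_{0,0} > 0 and t_{k,l} < 0 for all (k,l) ≠ (0,0), and suppose there exists C₀ > 0 such that ∑_{i=1}^{N-1} ∑_{j=1}^{N-1} t_{|p-i|,|q-j|} > C₀ for every (p,q) ∈ {1,…,N-1}². Let B₂ be the real symmetric matrix indexed by pairs (p,q), (i,j) ∈ {1,…,N-1}² with entries B₂[(p,q),(i,j)] = t_{|p-i|,|q-j|} (a block-Toeplitz matrix with Toeplitz blocks), and let vectors U, U_h, G, F indexed by {1,…,N-1}² satisfy B₂ U_h + G = F. Then ‖U - U_h‖_∞ ≤ C₀⁻¹ ‖F - (B₂ U + G)‖_∞ and ‖U - U_h‖₂ ≤ C₀⁻¹ ‖F - (B₂ U + G)‖₂. -/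
open Matrix

/-- Two-dimensional analogue: for the block-Toeplitz matrix `B₂` with
entries `t_{|p-i|,|q-j|}`, `t_{0,0} > 0`, `t_{k,l} < 0` otherwise, and row sums
`> C₀ > 0`, if `B₂ U_h + G = F` then both the maximum-norm and the Euclidean-norm
errors are bounded by `C₀⁻¹` times the corresponding norm of `F - (B₂ U + G)`. -/
theorem stmt3 (N : ℕ) (hN : 2 ≤ N) (t : ℕ → ℕ → ℝ)
    (ht0 : 0 < t 0 0)
    (htneg : ∀ k l : ℕ, k ≤ N - 2 → l ≤ N - 2 → ¬(k = 0 ∧ l = 0) → t k l < 0)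
    (C₀ : ℝ) (hC₀ : 0 < C₀)
    (B₂ : Matrix (Fin (N - 1) × Fin (N - 1)) (Fin (N - 1) × Fin (N - 1)) ℝ)
    (hB₂ : ∀ p i : Fin (N - 1) × Fin (N - 1),
      B₂ p i = t ((p.1 : ℤ) - (i.1 : ℤ)).natAbs ((p.2 : ℤ) - (i.2 : ℤ)).natAbs)
    (hrow : ∀ p : Fin (N - 1) × Fin (N - 1),
      C₀ < ∑ i : Fin (N - 1) × Fin (N - 1),
        t ((p.1 : ℤ) - (i.1 : ℤ)).natAbs ((p.2 : ℤ) - (i.2 : ℤ)).natAbs)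
    (U Uh G F : Fin (N - 1) × Fin (N - 1) → ℝ)
    (hsys : B₂.mulVec Uh + G = F) :
    ((⨆ p : Fin (N - 1) × Fin (N - 1), |U p - Uh p|)
        ≤ C₀⁻¹ * ⨆ p : Fin (N - 1) × Fin (N - 1), |F p - (B₂.mulVec U + G) p|) ∧
    (Real.sqrt (∑ p : Fin (N - 1) × Fin (N - 1), (U p - Uh p) ^ 2)
        ≤ C₀⁻¹ * Real.sqrt (∑ p : Fin (N - 1) × Fin (N - 1), (F p - (B₂.mulVec U + G) p) ^ 2)) := by
  haveI : NeZero (N - 1) := ⟨by omega⟩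
  set E : Fin (N - 1) × Fin (N - 1) → ℝ := fun p => U p - Uh p with hE
  set R : Fin (N - 1) × Fin (N - 1) → ℝ := fun p => F p - (B₂.mulVec U + G) p with hR
  have hRE : ∀ p, R p = - B₂.mulVec E p := by
    intro p
    have h1 := congrFun hsys p
    simp only [Pi.add_apply, mulVec, dotProduct] at h1
    simp only [hR, hE, Pi.add_apply, mulVec, dotProduct, mul_sub,
      Finset.sum_sub_distrib]
    linarith
  show ((⨆ p, |E p|) ≤ C₀⁻¹ * ⨆ p, |R p|) ∧
    (Real.sqrt (∑ p, E p ^ 2) ≤ C₀⁻¹ * Real.sqrt (∑ p, R p ^ 2))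
  clear_value E R
  clear hE hR hsys
  have hsym : ∀ p i : Fin (N - 1) × Fin (N - 1), B₂ p i = B₂ i p := by
    intro p i
    rw [hB₂, hB₂]
    congr 1 <;> omega
  have hoff : ∀ p i : Fin (N - 1) × Fin (N - 1), p ≠ i → B₂ p i < 0 := by
    intro p i hpi
    rw [hB₂]
    have h1 : (p.1 : ℕ) < N - 1 := p.1.isLt
    have h2 : (i.1 : ℕ) < N - 1 := i.1.isLt
    have h3 : (p.2 : ℕ) < N - 1 := p.2.isLt
    have h4 : (i.2 : ℕ) < N - 1 := i.2.isLt
    apply htneg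
    · omega
    · omega
    · rintro ⟨hk, hl⟩
      apply hpi
      have e1 : ((p.1 : ℤ)) = i.1 := by omega
      have e2 : ((p.2 : ℤ)) = i.2 := by omega
      exact Prod.ext (Fin.ext (by exact_mod_cast e1)) (Fin.ext (by exact_mod_cast e2))
  have hrowB : ∀ p : Fin (N - 1) × Fin (N - 1),
      C₀ < ∑ i : Fin (N - 1) × Fin (N - 1), B₂ p i := by
    intro p
    simp_rw [hB₂]
    exact hrow p
  have key : ∀ (x : Fin (N - 1) × Fin (N - 1) → ℝ) (p : Fin (N - 1) × Fin (N - 1)),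
      (∀ i, |x i| ≤ x p) → C₀ * x p ≤ B₂.mulVec x p := by
    intro x p hmax
    have hxp : 0 ≤ x p := le_trans (abs_nonneg _) (hmax p)
    have h1 : ∑ i, B₂ p i * x p ≤ ∑ i, B₂ p i * x i := by
      apply Finset.sum_le_sum
      intro i _
      by_cases hip : p = i
      · subst hip; exact le_refl _
      · have hb : B₂ p i < 0 := hoff p i hip
        have hxi : x i ≤ x p := le_trans (le_abs_self _) (hmax i)
        exact mul_le_mul_of_nonpos_left hxi hb.le
    calc C₀ * x p ≤ (∑ i, B₂ p i) * x p :=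
          mul_le_mul_of_nonneg_right (hrowB p).le hxp
      _ = ∑ i, B₂ p i * x p := by rw [Finset.sum_mul]
      _ ≤ ∑ i, B₂ p i * x i := h1
      _ = B₂.mulVec x p := rfl
  obtain ⟨p₀, hp₀⟩ := Finite.exists_max (fun p : Fin (N - 1) × Fin (N - 1) => |E p|)
  have hkey : C₀ * |E p₀| ≤ |B₂.mulVec E p₀| := by
    rcases le_or_gt 0 (E p₀) with h | h
    · have hm : ∀ i, |E i| ≤ E p₀ := by
        intro i; rw [← abs_of_nonneg h]; exact hp₀ i
      calc C₀ * |E p₀| = C₀ * E p₀ := by rw [abs_of_nonneg h]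
        _ ≤ B₂.mulVec E p₀ := key E p₀ hm
        _ ≤ |B₂.mulVec E p₀| := le_abs_self _
    · have hm : ∀ i, |(-E) i| ≤ (-E) p₀ := by
        intro i
        simp only [Pi.neg_apply, abs_neg]
        rw [← abs_of_nonneg (by simpa using h.le : (0:ℝ) ≤ -E p₀), abs_neg]
        exact hp₀ i
      have h2 := key (-E) p₀ hm
      rw [mulVec_neg] at h2
      calc C₀ * |E p₀| = C₀ * (-E) p₀ := by simp [abs_of_neg h]
        _ ≤ -B₂.mulVec E p₀ := h2
        _ ≤ |B₂.mulVec E p₀| := neg_le_abs _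
  constructor
  · apply ciSup_le
    intro i
    have h2 : |E p₀| ≤ C₀⁻¹ * |B₂.mulVec E p₀| := by
      rw [inv_mul_eq_div, le_div_iff₀ hC₀]
      linarith
    have h3 : |B₂.mulVec E p₀| = |R p₀| := by rw [hRE p₀, abs_neg]
    have h4 : |R p₀| ≤ ⨆ p, |R p| :=
      le_ciSup (f := fun p => |R p|) (Finite.bddAbove_range _) p₀
    calc |E i| ≤ |E p₀| := hp₀ i
      _ ≤ C₀⁻¹ * |B₂.mulVec E p₀| := h2
      _ = C₀⁻¹ * |R p₀| := by rw [h3]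
      _ ≤ C₀⁻¹ * ⨆ p, |R p| :=
          mul_le_mul_of_nonneg_left h4 (inv_nonneg.mpr hC₀.le)
  · have hquad : C₀ * ∑ p, E p ^ 2 ≤ ∑ p, E p * B₂.mulVec E p := by
      have step1 : ∑ p, E p * B₂.mulVec E p
          = ∑ p, ∑ i, B₂ p i * (E p * E i) := by
        simp only [mulVec, dotProduct, Finset.mul_sum]
        apply Finset.sum_congr rfl; intro p _
        apply Finset.sum_congr rfl; intro i _
        ring
      have step2 : ∑ p, ∑ i, B₂ p i * ((E p ^ 2 + E i ^ 2) / 2)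
          ≤ ∑ p, ∑ i, B₂ p i * (E p * E i) := by
        apply Finset.sum_le_sum; intro p _
        apply Finset.sum_le_sum; intro i _
        rcases eq_or_ne p i with hip | hip
        · subst hip
          apply le_of_eq
          ring
        · have hb : B₂ p i < 0 := hoff p i hip
          have hsq : E p * E i ≤ (E p ^ 2 + E i ^ 2) / 2 := by
            have h0 : 0 ≤ (E p - E i) ^ 2 := sq_nonneg _
            have h1 : (E p - E i) ^ 2 = E p ^ 2 - 2 * (E p * E i) + E i ^ 2 := by ring
            linarith
          exact mul_le_mul_of_nonpos_left hsq hb.le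
      have swap : ∑ p, ∑ i, B₂ p i * E i ^ 2
          = ∑ p, ∑ i, B₂ p i * E p ^ 2 := by
        rw [Finset.sum_comm]
        apply Finset.sum_congr rfl; intro p _
        apply Finset.sum_congr rfl; intro i _
        rw [hsym]
      have step3 : ∑ p, ∑ i, B₂ p i * ((E p ^ 2 + E i ^ 2) / 2)
          = ∑ p, (∑ i, B₂ p i) * E p ^ 2 := by
        calc ∑ p, ∑ i, B₂ p i * ((E p ^ 2 + E i ^ 2) / 2)
            = (∑ p, ∑ i, B₂ p i * E p ^ 2) / 2
              + (∑ p, ∑ i, B₂ p i * E i ^ 2) / 2 := by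
              rw [Finset.sum_div, Finset.sum_div, ← Finset.sum_add_distrib]
              apply Finset.sum_congr rfl; intro p _
              rw [Finset.sum_div, Finset.sum_div, ← Finset.sum_add_distrib]
              apply Finset.sum_congr rfl; intro i _
              ring
          _ = ∑ p, ∑ i, B₂ p i * E p ^ 2 := by rw [swap]; ring
          _ = ∑ p, (∑ i, B₂ p i) * E p ^ 2 := by
              apply Finset.sum_congr rfl; intro p _
              rw [Finset.sum_mul]
      have step4 : C₀ * ∑ p, E p ^ 2 ≤ ∑ p, (∑ i, B₂ p i) * E p ^ 2 := by
        rw [Finset.mul_sum]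
        apply Finset.sum_le_sum
        intro p _
        exact mul_le_mul_of_nonneg_right (hrowB p).le (sq_nonneg _)
      calc C₀ * ∑ p, E p ^ 2 ≤ ∑ p, (∑ i, B₂ p i) * E p ^ 2 := step4
        _ = ∑ p, ∑ i, B₂ p i * ((E p ^ 2 + E i ^ 2) / 2) := step3.symm
        _ ≤ ∑ p, ∑ i, B₂ p i * (E p * E i) := step2
        _ = ∑ p, E p * B₂.mulVec E p := step1.symm
    set a := Real.sqrt (∑ p, E p ^ 2) with ha
    set b := Real.sqrt (∑ p, (B₂.mulVec E p) ^ 2) with hb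
    have hcs : ∑ p, E p * B₂.mulVec E p ≤ a * b :=
      Real.sum_mul_le_sqrt_mul_sqrt Finset.univ E (B₂.mulVec E)
    have hRsq : ∑ p, R p ^ 2 = ∑ p, (B₂.mulVec E p) ^ 2 := by
      apply Finset.sum_congr rfl; intro p _
      rw [hRE p]; ring
    show a ≤ C₀⁻¹ * Real.sqrt (∑ p, R p ^ 2)
    rw [hRsq, ← hb]
    have ha2 : a ^ 2 = ∑ p, E p ^ 2 :=
      Real.sq_sqrt (Finset.sum_nonneg fun p _ => sq_nonneg _)
    have hha : 0 ≤ a := Real.sqrt_nonneg _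
    rcases eq_or_lt_of_le hha with h0 | h0
    · rw [← h0]
      positivity
    · have h5 : C₀ * a ^ 2 ≤ a * b := by
        rw [ha2]; exact le_trans hquad hcs
      have h6 : C₀ * a ≤ b := by nlinarith
      rw [inv_mul_eq_div, le_div_iff₀ hC₀]
      linarith
end

section
/- For every s ∈ (0,1/2) ∪ (1/2,1) and every h > 0, the weights w_k satisfy w_{-k} = w_k for all integers k ≥ 0, and w_k < 0 for every integer k with |k| ≥ 2. -/
/-!
Reflecting `y ↦ -y` gives `ω̄_{-k} = ω̄_k`, hence `w_{-k} = w_k`. For `k ≥ 2` the points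
`(k ± 1)h - y` and `kh - y` are positive on the support of `φ̄₁`, so `-h² w_k` is the integral of
`φ̄₁(y)` against the second difference, with step `h` at `(k - 1)h - y`, of
`x ↦ c_{1,s-1} x^p`, `p = 1 - 2s`. Since `Γ(s + 1/2) = (s - 1/2) Γ(s - 1/2)`, the constant
`c_{1,s-1}` has the sign of `p (p - 1) = 4s(s - 1/2)`, so this function is strictly convex on
`(0, ∞)` in both regimes `s < 1/2` and `s > 1/2`, and the second difference is positive.
-/

/-- The constant `c_{1,s-1} = -2^{2s-2}(s-1)Γ(s-1/2)/(π^{1/2}Γ(2-s))`. -/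
noncomputable def c1m (s : ℝ) : ℝ :=
  -(2 : ℝ) ^ (2 * s - 2) * (s - 1) * Real.Gamma (s - 1 / 2) /
    (Real.sqrt Real.pi * Real.Gamma (2 - s))

/-- The hat function `φ̄₁(y) = 1 - |y|/h` for `|y| < h`, `0` otherwise. -/
noncomputable def phiBar1 (h y : ℝ) : ℝ := if |y| < h then 1 - |y| / h else 0

/-- The weight `ω̄_k = c_{1,s-1} ∫_{-h}^{h} |kh - y|^{1-2s} φ̄₁(y) dy`. -/
noncomputable def omegaBar (s h : ℝ) (k : ℤ) : ℝ :=
  c1m s * ∫ y in (-h)..h, |(k : ℝ) * h - y| ^ (1 - 2 * s) * phiBar1 h y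

/-- The weight `w_k = -(ω̄_{k-1} - 2ω̄_k + ω̄_{k+1})/h²`. -/
noncomputable def wgt (s h : ℝ) (k : ℤ) : ℝ :=
  -(omegaBar s h (k - 1) - 2 * omegaBar s h k + omegaBar s h (k + 1)) / h ^ 2

open Set Real MeasureTheory

lemma StrictConvexOn.second_difference_pos {E : Type*} [AddCommGroup E] [Module ℝ E]
    {s : Set E} {f : E → ℝ} (hf : StrictConvexOn ℝ s f) {x d : E} (hx : x ∈ s)
    (hx₂ : x + (2 : ℝ) • d ∈ s) (hd : d ≠ 0) :
    0 < f x - 2 * f (x + d) + f (x + (2 : ℝ) • d) := by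
  have hne : x ≠ x + (2 : ℝ) • d := left_eq_add.not.mpr (smul_ne_zero two_ne_zero hd)
  have key := hf.2 hx hx₂ hne (by norm_num : (0 : ℝ) < 1 / 2)
    (by norm_num : (0 : ℝ) < 1 / 2) (by norm_num)
  rw [show (1 / 2 : ℝ) • x + (1 / 2 : ℝ) • (x + (2 : ℝ) • d) = x + d by module,
    smul_eq_mul, smul_eq_mul] at key
  linarith

lemma strictConvexOn_const_mul_rpow {c p : ℝ} (h : 0 < c * (p * (p - 1))) :
    StrictConvexOn ℝ (Ioi 0) fun x : ℝ => c * x ^ p := by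
  refine strictConvexOn_of_deriv2_pos (convex_Ioi 0) ?_ fun x hx => ?_
  · exact fun x hx => ((continuousAt_rpow_const x p (.inl hx.ne')).const_mul c).continuousWithinAt
  · rw [interior_Ioi] at hx
    have hderiv : deriv^[2] (fun x : ℝ => c * x ^ p) x = c * (p * (p - 1)) * x ^ (p - 2) := by
      simp only [Function.iterate_succ, Function.iterate_zero, Function.comp_apply, id,
        deriv_const_mul_field', Real.deriv_rpow_const]
      ring_nf
    rw [hderiv]
    exact mul_pos h (rpow_pos_of_pos hx _)

lemma intervalIntegrable_abs_rpow {r : ℝ} (hr : -1 < r) (a b : ℝ) :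
    IntervalIntegrable (fun x : ℝ => |x| ^ r) volume a b := by
  have from_zero : ∀ c, 0 ≤ c → IntervalIntegrable (fun x : ℝ => |x| ^ r) volume 0 c :=
    fun c hc => (intervalIntegral.intervalIntegrable_rpow' hr).congr fun x hx => by
      rw [uIoc_of_le hc] at hx
      simp [abs_of_pos hx.1]
  have : ∀ c, IntervalIntegrable (fun x : ℝ => |x| ^ r) volume 0 c := by
    intro c
    rcases le_total 0 c with hc | hc
    · exact from_zero c hc
    · rw [IntervalIntegrable.iff_comp_neg]
      simpa using from_zero (-c) (by linarith)
  exact (this a).symm.trans (this b)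

lemma intervalIntegrable_abs_sub_rpow {r : ℝ} (hr : -1 < r) (c a b : ℝ) :
    IntervalIntegrable (fun x : ℝ => |c - x| ^ r) volume a b := by
  simpa using (intervalIntegrable_abs_rpow hr (c - a) (c - b)).comp_sub_left c

lemma phiBar1_eq_max {h : ℝ} (hh : 0 < h) (y : ℝ) : phiBar1 h y = max (1 - |y| / h) 0 := by
  unfold phiBar1
  split_ifs with hy
  · have : |y| / h < 1 := (div_lt_one hh).mpr hy
    rw [max_eq_left (by linarith)]
  · have : 1 ≤ |y| / h := (one_le_div hh).mpr (not_lt.mp hy)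
    rw [max_eq_right (by linarith)]

lemma continuous_phiBar1 {h : ℝ} (hh : 0 < h) : Continuous (phiBar1 h) := by
  simp only [funext (phiBar1_eq_max hh)]
  fun_prop

lemma phiBar1_pos {h y : ℝ} (hy : |y| < h) : 0 < phiBar1 h y := by
  have hh : 0 < h := (abs_nonneg y).trans_lt hy
  simpa [phiBar1, hy] using (div_lt_one hh).mpr hy

lemma omegaBar_neg (s h : ℝ) (k : ℤ) : omegaBar s h (-k) = omegaBar s h k := by
  unfold omegaBar
  congr 1
  have hreflect : ∀ y : ℝ, |((-k : ℤ) : ℝ) * h - y| ^ (1 - 2 * s) * phiBar1 h y =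
      |(k : ℝ) * h - -y| ^ (1 - 2 * s) * phiBar1 h (-y) := by
    intro y
    rw [show ((-k : ℤ) : ℝ) * h - y = -((k : ℝ) * h - -y) by push_cast; ring, abs_neg]
    simp [phiBar1]
  simp_rw [hreflect]
  simpa using intervalIntegral.integral_comp_neg
    (a := -h) (b := h) fun y => |(k : ℝ) * h - y| ^ (1 - 2 * s) * phiBar1 h y

lemma wgt_neg (s h : ℝ) (k : ℤ) : wgt s h (-k) = wgt s h k := by
  unfold wgt
  rw [show -k - 1 = -(k + 1) by ring, show -k + 1 = -(k - 1) by ring,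
    omegaBar_neg, omegaBar_neg, omegaBar_neg]
  ring

lemma c1m_mul_pos {s : ℝ} (hs : s ∈ Ioo 0 1) (hs' : s ≠ 1 / 2) :
    0 < c1m s * ((1 - 2 * s) * (1 - 2 * s - 1)) := by
  have hΓ := Gamma_add_one (sub_ne_zero.mpr hs')
  rw [show s - 1 / 2 + 1 = s + 1 / 2 by ring] at hΓ
  have hrw : c1m s * ((1 - 2 * s) * (1 - 2 * s - 1)) = 4 * s * (1 - s) * (2 : ℝ) ^ (2 * s - 2) *
      Gamma (s + 1 / 2) / (√π * Gamma (2 - s)) := by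
    rw [hΓ, c1m]
    ring
  rw [hrw]
  have hs₀ := hs.1
  have hs₁ : 0 < 1 - s := sub_pos.mpr hs.2
  have hΓ₁ := Gamma_pos_of_pos (by linarith : 0 < s + 1 / 2)
  have hΓ₂ := Gamma_pos_of_pos (by linarith : 0 < 2 - s)
  exact div_pos (by positivity) (by positivity)

lemma wgt_eq_integral {s h : ℝ} (hs : s < 1) (hh : 0 < h) (k : ℤ) :
    wgt s h k = -(∫ y in (-h)..h,
      (c1m s * |((k : ℝ) - 1) * h - y| ^ (1 - 2 * s)
        - 2 * (c1m s * |(k : ℝ) * h - y| ^ (1 - 2 * s))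
        + c1m s * |((k : ℝ) + 1) * h - y| ^ (1 - 2 * s)) * phiBar1 h y) / h ^ 2 := by
  have hint : ∀ c : ℝ, IntervalIntegrable (fun y => |c - y| ^ (1 - 2 * s) * phiBar1 h y)
      volume (-h) h := fun c =>
    (intervalIntegrable_abs_sub_rpow (by linarith) c _ _).mul_continuousOn
      (continuous_phiBar1 hh).continuousOn
  simp_rw [add_mul _ _ (phiBar1 h _), sub_mul _ _ (phiBar1 h _), mul_assoc]
  rw [intervalIntegral.integral_add
      (((hint _).const_mul _).sub (((hint _).const_mul _).const_mul _)) ((hint _).const_mul _),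
    intervalIntegral.integral_sub ((hint _).const_mul _) (((hint _).const_mul _).const_mul _)]
  simp only [intervalIntegral.integral_const_mul, wgt, omegaBar]
  push_cast
  ring

lemma wgt_neg_of_two_le {s h : ℝ} (hs : s ∈ Ioo 0 1) (hs' : s ≠ 1 / 2) (hh : 0 < h) {k : ℤ}
    (hk : 2 ≤ k) : wgt s h k < 0 := by
  rw [wgt_eq_integral hs.2 hh, neg_div, neg_neg_iff_pos]
  refine div_pos (intervalIntegral.intervalIntegral_pos_of_pos_on ?integrable ?pos (by linarith))
    (by positivity)
  case integrable =>
    have hI := fun c =>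
      intervalIntegrable_abs_sub_rpow (r := 1 - 2 * s) (by linarith [hs.2]) c (-h) h
    exact ((((hI _).const_mul _).sub (((hI _).const_mul _).const_mul _)).add
      ((hI _).const_mul _)).mul_continuousOn (continuous_phiBar1 hh).continuousOn
  case pos =>
    intro y ⟨hy₁, hy₂⟩
    have hk' : (2 : ℝ) ≤ k := by exact_mod_cast hk
    have ha : 0 < ((k : ℝ) - 1) * h - y := by nlinarith
    have hdiff := (strictConvexOn_const_mul_rpow (c1m_mul_pos hs hs')).second_difference_pos ha
      (mem_Ioi.mpr (by positivity)) hh.ne'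
    simp only [smul_eq_mul] at hdiff
    rw [show (k : ℝ) * h - y = ((k : ℝ) - 1) * h - y + h by ring,
      show ((k : ℝ) + 1) * h - y = ((k : ℝ) - 1) * h - y + 2 * h by ring,
      abs_of_pos ha, abs_of_pos (by linarith), abs_of_pos (by linarith)]
    exact mul_pos hdiff (phiBar1_pos (abs_lt.mpr ⟨hy₁, hy₂⟩))

/-- for every admissible  and , the weights satisfy
 for all  and  whenever . -/
theorem stmt4 (s : ℝ) (hs : s ∈ Set.Ioo (0 : ℝ) (1 / 2) ∪ Set.Ioo (1 / 2 : ℝ) 1)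
    (h : ℝ) (hh : 0 < h) :
    (∀ k : ℕ, wgt s h (-(k : ℤ)) = wgt s h (k : ℤ)) ∧
    (∀ k : ℤ, 2 ≤ |k| → wgt s h k < 0) := by
  have hs₀₁ : s ∈ Ioo 0 1 := by
    rcases hs with hs | hs <;> constructor <;> linarith [hs.1, hs.2]
  have hs_ne : s ≠ 1 / 2 := by
    rcases hs with hs | hs <;> [exact hs.2.ne; exact hs.1.ne']
  refine ⟨fun k => wgt_neg s h k, fun k hk => ?_⟩
  rcases le_abs'.mp hk with hk | hk
  · rw [← wgt_neg]
    exact wgt_neg_of_two_le hs₀₁ hs_ne hh (by omega)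
  · exact wgt_neg_of_two_le hs₀₁ hs_ne hh hk
end

section
/- For every s ∈ (0,1/2) ∪ (1/2,1) and every h > 0, the weight w₁ has the explicit value w₁ = -c_{1,s-1} h^{-2s} (7 - 2^{5-2s} + 3^{3-2s}) / ((2s-3)(2s-2)). -/
/-!
Write `α = 1 - 2s > -1`. On each half of `[-h, h]` the hat function is linear, so after the
substitution `u = kh - y` each half of the integral defining `ω̄_k` is `± h⁻¹ ∫ u ^ α (u - c) du`.
Adding the two halves, `ω̄_k` is `c_{1,s-1} / h` times the second difference of
`G u = |u| ^ (α + 2) / ((α + 1)(α + 2))` at `(k-1)h, kh, (k+1)h`, hence `w₁` is a fourth difference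
of `G` on `-h, 0, h, 2h, 3h`. As `G` is even, vanishes at `0` and is homogeneous of degree
`3 - 2s`, this is `h ^ (3 - 2s) (3 ^ (3-2s) - 4 · 2 ^ (3-2s) + 7) / ((α + 1)(α + 2))`.
-/
open Real intervalIntegral Set

lemma rpow_mul_sub_eq {α : ℝ} (hα : -1 < α) (u c : ℝ) :
    u ^ α * (u - c) = u ^ (α + 1) - c * u ^ α := by
  rcases eq_or_ne u 0 with rfl | hu
  · rw [zero_rpow (show α + 1 ≠ 0 by linarith)]; ring
  · rw [rpow_add_one hu]; ring

lemma rpow_add_two_eq_mul {p α : ℝ} (hp : 0 ≤ p) (hα : α + 2 ≠ 0) :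
    p ^ (α + 2) = p ^ (α + 1) * p := by
  have h : α + 1 + 1 = α + 2 := by ring
  rw [← h, rpow_add_one' hp (h ▸ hα)]

lemma intervalIntegrable_rpow_mul_sub {α : ℝ} (hα : -1 < α) (c a b : ℝ) :
    IntervalIntegrable (fun u ↦ u ^ α * (u - c)) MeasureTheory.volume a b :=
  (intervalIntegrable_rpow' hα).mul_continuousOn (by fun_prop)

lemma intervalIntegrable_sub_rpow_mul_sub {α : ℝ} (hα : -1 < α) (x c a b : ℝ) :
    IntervalIntegrable (fun y ↦ (x - y) ^ α * ((x - y) - c)) MeasureTheory.volume a b := by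
  simpa using (intervalIntegrable_rpow_mul_sub hα c (x - a) (x - b)).comp_sub_left x

lemma integral_rpow_mul_sub {α : ℝ} (hα : -1 < α) (a b c : ℝ) :
    ∫ u in a..b, u ^ α * (u - c) =
      (b ^ (α + 2) - a ^ (α + 2)) / (α + 2) - c * (b ^ (α + 1) - a ^ (α + 1)) / (α + 1) := by
  have hα' : -1 < α + 1 := by linarith
  simp_rw [rpow_mul_sub_eq hα]
  rw [integral_sub (intervalIntegrable_rpow' hα') ((intervalIntegrable_rpow' hα).const_mul c),
    integral_const_mul, integral_rpow (Or.inl hα), integral_rpow (Or.inl hα'),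
    show α + 1 + 1 = α + 2 by ring]
  ring

lemma integral_eq_add_of_eqOn {f g₁ g₂ : ℝ → ℝ} {a b c : ℝ}
    (h₁ : EqOn g₁ f (uIcc a b)) (h₂ : EqOn g₂ f (uIcc b c))
    (hg₁ : IntervalIntegrable g₁ MeasureTheory.volume a b)
    (hg₂ : IntervalIntegrable g₂ MeasureTheory.volume b c) :
    ∫ x in a..c, f x = (∫ x in a..b, g₁ x) + ∫ x in b..c, g₂ x := by
  rw [← integral_add_adjacent_intervals (hg₁.congr (h₁.mono uIoc_subset_uIcc))
    (hg₂.congr (h₂.mono uIoc_subset_uIcc)), integral_congr h₁, integral_congr h₂]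

lemma phiBar1_of_abs_le {h y : ℝ} (hh : 0 < h) (hy : |y| ≤ h) : phiBar1 h y = 1 - |y| / h := by
  rcases hy.lt_or_eq with hy | hy
  · exact if_pos hy
  · rw [phiBar1, if_neg hy.not_lt, hy, div_self hh.ne', sub_self]

lemma integral_abs_sub_rpow_mul_phiBar1 {α h x : ℝ} (hα : -1 < α) (hh : 0 < h) (hx : h ≤ x) :
    ∫ y in (-h)..h, |x - y| ^ α * phiBar1 h y =
      ((x + h) ^ (α + 2) - 2 * x ^ (α + 2) + (x - h) ^ (α + 2)) / ((α + 1) * (α + 2) * h) := by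
  have left : EqOn (fun y ↦ -((x - y) ^ α * ((x - y) - (x + h))) / h)
      (fun y ↦ |x - y| ^ α * phiBar1 h y) (uIcc (-h) 0) := by
    intro y hy
    rw [uIcc_of_le (by linarith)] at hy
    dsimp only
    rw [phiBar1_of_abs_le hh (abs_le.mpr ⟨hy.1, by linarith [hy.2]⟩),
      abs_of_nonneg (by linarith [hy.2] : 0 ≤ x - y), abs_of_nonpos hy.2]
    field_simp
    ring
  have right : EqOn (fun y ↦ (x - y) ^ α * ((x - y) - (x - h)) / h)
      (fun y ↦ |x - y| ^ α * phiBar1 h y) (uIcc 0 h) := by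
    intro y hy
    rw [uIcc_of_le hh.le] at hy
    dsimp only
    rw [phiBar1_of_abs_le hh (abs_le.mpr ⟨by linarith [hy.1], hy.2⟩),
      abs_of_nonneg (by linarith [hy.2] : 0 ≤ x - y), abs_of_nonneg hy.1]
    field_simp
    ring
  have hL := integral_comp_sub_left (fun u ↦ -(u ^ α * (u - (x + h))) / h) x (a := -h) (b := 0)
  have hR := integral_comp_sub_left (fun u ↦ u ^ α * (u - (x - h)) / h) x (a := 0) (b := h)
  simp only [sub_zero, sub_neg_eq_add] at hL hR
  rw [integral_eq_add_of_eqOn left right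
    ((intervalIntegrable_sub_rpow_mul_sub hα x (x + h) _ _).neg.div_const h)
    ((intervalIntegrable_sub_rpow_mul_sub hα x (x - h) _ _).div_const h), hL, hR,
    integral_div, integral_div, integral_neg, integral_rpow_mul_sub hα, integral_rpow_mul_sub hα]
  have hα1 : α + 1 ≠ 0 := by linarith
  have hα2 : α + 2 ≠ 0 := by linarith
  rw [rpow_add_two_eq_mul (by linarith) hα2, rpow_add_two_eq_mul (by linarith) hα2,
    rpow_add_two_eq_mul (by linarith) hα2]
  field_simp
  ring

lemma integral_abs_rpow_mul_phiBar1 {α h : ℝ} (hα : -1 < α) (hh : 0 < h) :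
    ∫ y in (-h)..h, |y| ^ α * phiBar1 h y = 2 * h ^ (α + 2) / ((α + 1) * (α + 2) * h) := by
  have left : EqOn (fun y ↦ -((-y) ^ α * (-y - h)) / h) (fun y ↦ |y| ^ α * phiBar1 h y)
      (uIcc (-h) 0) := by
    intro y hy
    rw [uIcc_of_le (by linarith)] at hy
    dsimp only
    rw [phiBar1_of_abs_le hh (abs_le.mpr ⟨hy.1, by linarith [hy.2]⟩), abs_of_nonpos hy.2]
    field_simp
    ring
  have right : EqOn (fun y ↦ -(y ^ α * (y - h)) / h) (fun y ↦ |y| ^ α * phiBar1 h y)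
      (uIcc 0 h) := by
    intro y hy
    rw [uIcc_of_le hh.le] at hy
    dsimp only
    rw [phiBar1_of_abs_le hh (abs_le.mpr ⟨by linarith [hy.1], hy.2⟩), abs_of_nonneg hy.1]
    field_simp
    ring
  have hint := (IntervalIntegrable.iff_comp_neg).mp (intervalIntegrable_rpow_mul_sub hα h h 0)
  simp only [neg_zero] at hint
  have hL := integral_comp_neg (fun u ↦ -(u ^ α * (u - h)) / h) (a := -h) (b := 0)
  simp only [neg_zero, neg_neg] at hL
  rw [integral_eq_add_of_eqOn left right (hint.neg.div_const h)
    ((intervalIntegrable_rpow_mul_sub hα h 0 h).neg.div_const h), hL, integral_div, integral_neg,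
    integral_rpow_mul_sub hα, zero_rpow (by linarith), zero_rpow (by linarith)]
  have hα1 : α + 1 ≠ 0 := by linarith
  have hα2 : α + 2 ≠ 0 := by linarith
  rw [rpow_add_two_eq_mul hh.le hα2]
  field_simp
  ring

/-- the explicit value of `w₁`. -/
theorem stmt6 (s : ℝ) (hs : s ∈ Set.Ioo (0 : ℝ) (1 / 2) ∪ Set.Ioo (1 / 2 : ℝ) 1)
    (h : ℝ) (hh : 0 < h) :
    wgt s h 1 = -c1m s * h ^ (-(2 * s)) * (7 - (2 : ℝ) ^ (5 - 2 * s) + (3 : ℝ) ^ (3 - 2 * s)) /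
      ((2 * s - 3) * (2 * s - 2)) := by
  have hs1 : s < 1 := by rcases hs with ⟨-, hs⟩ | ⟨-, hs⟩ <;> linarith
  have hα : -1 < 1 - 2 * s := by linarith
  have hw : wgt s h 1 = -(c1m s * (∫ y in (-h)..h, |y| ^ (1 - 2 * s) * phiBar1 h y)
      - 2 * (c1m s * ∫ y in (-h)..h, |h - y| ^ (1 - 2 * s) * phiBar1 h y)
      + c1m s * ∫ y in (-h)..h, |2 * h - y| ^ (1 - 2 * s) * phiBar1 h y) / h ^ 2 := by
    norm_num [wgt, omegaBar, one_add_one_eq_two]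
  rw [hw, integral_abs_rpow_mul_phiBar1 hα hh, integral_abs_sub_rpow_mul_phiBar1 hα hh le_rfl,
    integral_abs_sub_rpow_mul_phiBar1 hα hh (by linarith : h ≤ 2 * h)]
  rw [sub_self, zero_rpow (by linarith), show h + h = 2 * h by ring,
    show 2 * h + h = 3 * h by ring, show 2 * h - h = h by ring,
    mul_rpow zero_le_two hh.le, mul_rpow zero_le_three hh.le]
  rw [show 1 - 2 * s + 2 = 3 - 2 * s by ring, show 1 - 2 * s + 1 = 2 - 2 * s by ring,
    show (5 : ℝ) - 2 * s = 3 - 2 * s + 2 by ring, rpow_add two_pos,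
    show (3 : ℝ) - 2 * s = -(2 * s) + 3 by ring, rpow_add hh,
    show (2 * s - 3) * (2 * s - 2) = (2 - 2 * s) * (-(2 * s) + 3) by ring]
  simp only [rpow_ofNat]
  have h₁ : 2 - 2 * s ≠ 0 := by linarith
  have h₂ : -(2 * s) + 3 ≠ 0 := by linarith
  field_simp
  ring
end

section
/- Let α ∈ (0,1], L > 0, let N ≥ 1 be an integer, h = 2L/N, and let u : [-L,L]² → ℝ be continuously differentiable with both first partial derivatives α-Hölder continuous on [-L,L]², and let ‖u‖_{C^{1,α}} denote the sum of the supremum norms of u, ∂u/∂x, ∂u/∂y and the α-Hölder seminorms of ∂u/∂x and ∂u/∂y on [-L,L]². Let I₂u be the piecewise-bilinear interpolant of u on the uniform grid (x_i,y_j) = (-L+ih, -L+jh), 0 ≤ i,j ≤ N. Then there exists a constant C > 0 depending only on α such that sup_{(x,y) ∈ [-L,L]²} |u(x,y) - (I₂u)(x,y)| ≤ C h^{1+α} ‖u‖_{C^{1,α}}. -/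
/-- The one-dimensional hat function centered at c with mesh h. -/
noncomputable def hatFn (h c y : ℝ) : ℝ := max 0 (1 - |y - c| / h)

/-- The piecewise-bilinear interpolant of u on the uniform grid of [-L,L]²,
written as the tensor-product hat-function expansion (which agrees with u at each
node and is bilinear on each cell). -/
noncomputable def interp2D (u : ℝ → ℝ → ℝ) (L h : ℝ) (N : ℕ) (ξ η : ℝ) : ℝ :=
  ∑ p ∈ Finset.range (N + 1), ∑ q ∈ Finset.range (N + 1),
    u (-L + p * h) (-L + q * h) * hatFn h (-L + p * h) ξ * hatFn h (-L + q * h) η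

/-!
On the grid cell `[x, x + h] × [y, y + h]` containing `(ξ, η)` only four hat functions are
nonzero, and the interpolant is the linear interpolation in `y` of the linear interpolations
in `x` along the two horizontal edges. In one variable, subtracting the tangent slope `f'(η)`
and applying the mean value theorem bounds the linear interpolation error on a cell of width
`h` by `h` times the oscillation of `f'` on the cell, hence by `H h^(1+α)`. The 2D error is
the 1D error in `y` at abscissa `ξ` plus a convex combination of the 1D errors in `x` on the
two edges, so it is at most `(Hx + Hy) h^(1+α)`, and `C = 1` works.
-/

open Set

noncomputable def linInterp (f : ℝ → ℝ) (x h η : ℝ) : ℝ :=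
  f x * ((x + h - η) / h) + f (x + h) * ((η - x) / h)

section LinearInterpolation

variable {x h η : ℝ}

lemma abs_linInterp_le {f : ℝ → ℝ} {K : ℝ} (hh : 0 < h) (hη : η ∈ Icc x (x + h))
    (hx : |f x| ≤ K) (hxh : |f (x + h)| ≤ K) : |linInterp f x h η| ≤ K := by
  have hw₁ : 0 ≤ (x + h - η) / h := div_nonneg (by linarith [hη.2]) hh.le
  have hw₂ : 0 ≤ (η - x) / h := div_nonneg (by linarith [hη.1]) hh.le
  have hsum : (x + h - η) / h + (η - x) / h = 1 := by field_simp; ring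
  calc |linInterp f x h η|
      ≤ |f x| * ((x + h - η) / h) + |f (x + h)| * ((η - x) / h) := by
        refine (abs_add_le _ _).trans_eq ?_
        rw [abs_mul, abs_mul, abs_of_nonneg hw₁, abs_of_nonneg hw₂]
    _ ≤ K * ((x + h - η) / h) + K * ((η - x) / h) := by gcongr
    _ = K := by rw [← mul_add, hsum, mul_one]

lemma abs_sub_linInterp_le {f f' : ℝ → ℝ} {K : ℝ} (hh : 0 < h)
    (hf : ∀ t ∈ Icc x (x + h), HasDerivWithinAt f (f' t) (Icc x (x + h)) t)
    (hK : ∀ t ∈ Icc x (x + h), |f' t - f' η| ≤ K) (hη : η ∈ Icc x (x + h)) :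
    |f η - linInterp f x h η| ≤ K * h := by
  set g : ℝ → ℝ := fun t => f t - t * f' η
  have hg : ∀ t ∈ Icc x (x + h), HasDerivWithinAt g (f' t - f' η) (Icc x (x + h)) t :=
    fun t ht => (hf t ht).sub (((hasDerivAt_id t).mul_const (f' η)).hasDerivWithinAt.congr_deriv
      (one_mul _))
  have hosc : ∀ t ∈ Icc x (x + h), |g t - g η| ≤ K * h := fun t ht =>
    calc |g t - g η| ≤ K * |t - η| :=
          (convex_Icc x (x + h)).norm_image_sub_le_of_norm_hasDerivWithin_le hg hK hη ht
      _ ≤ K * h := by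
          have hK0 : 0 ≤ K := (abs_nonneg _).trans (hK η hη)
          gcongr
          rw [abs_le]
          constructor <;> linarith [ht.1, ht.2, hη.1, hη.2]
  -- linear interpolation reproduces affine functions
  have herr : f η - linInterp f x h η = -linInterp (fun t => g t - g η) x h η := by
    simp only [g, linInterp]
    field_simp
    ring
  rw [herr, abs_neg]
  exact abs_linInterp_le hh hη (hosc x ⟨le_rfl, by linarith⟩) (hosc (x + h) ⟨by linarith, le_rfl⟩)

lemma abs_sub_linInterp_le_of_holder {f f' : ℝ → ℝ} {s : Set ℝ} {H α : ℝ} (hα : 0 ≤ α)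
    (hh : 0 < h) (hs : Icc x (x + h) ⊆ s) (hf : ∀ t ∈ s, HasDerivWithinAt f (f' t) s t)
    (hH : ∀ t ∈ s, ∀ t' ∈ s, |f' t - f' t'| ≤ H * |t - t'| ^ α) (hη : η ∈ Icc x (x + h)) :
    |f η - linInterp f x h η| ≤ H * h ^ (1 + α) := by
  have hx : x ∈ s := hs ⟨le_rfl, by linarith⟩
  have hxh : x + h ∈ s := hs ⟨by linarith, le_rfl⟩
  have hH0 : 0 ≤ H := by
    have := (abs_nonneg _).trans (hH x hx (x + h) hxh)
    rw [sub_add_cancel_left, abs_neg, abs_of_pos hh] at this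
    exact nonneg_of_mul_nonneg_left this (Real.rpow_pos_of_pos hh α)
  have hK : ∀ t ∈ Icc x (x + h), |f' t - f' η| ≤ H * h ^ α := fun t ht =>
    (hH t (hs ht) η (hs hη)).trans <| by
      gcongr
      rw [abs_le]
      constructor <;> linarith [ht.1, ht.2, hη.1, hη.2]
  calc |f η - linInterp f x h η| ≤ H * h ^ α * h :=
        abs_sub_linInterp_le hh (fun t ht => (hf t (hs ht)).mono hs) hK hη
    _ = H * h ^ (1 + α) := by rw [Real.rpow_add hh, Real.rpow_one]; ring

end LinearInterpolation

lemma abs_sub_linInterp_linInterp_le {u ux uy : ℝ → ℝ → ℝ} {s : Set ℝ} {Hx Hy α x y h ξ η : ℝ}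
    (hα : 0 ≤ α) (hh : 0 < h) (hxs : Icc x (x + h) ⊆ s) (hys : Icc y (y + h) ⊆ s)
    (hux : ∀ a ∈ s, ∀ b ∈ s, HasDerivWithinAt (fun t => u t b) (ux a b) s a)
    (huy : ∀ a ∈ s, ∀ b ∈ s, HasDerivWithinAt (fun t => u a t) (uy a b) s b)
    (hHx : ∀ b ∈ s, ∀ a ∈ s, ∀ a' ∈ s, |ux a b - ux a' b| ≤ Hx * |a - a'| ^ α)
    (hHy : ∀ a ∈ s, ∀ b ∈ s, ∀ b' ∈ s, |uy a b - uy a b'| ≤ Hy * |b - b'| ^ α)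
    (hξ : ξ ∈ Icc x (x + h)) (hη : η ∈ Icc y (y + h)) :
    |u ξ η - linInterp (fun t => linInterp (fun r => u r t) x h ξ) y h η|
      ≤ (Hx + Hy) * h ^ (1 + α) := by
  have errX : ∀ t ∈ s, |u ξ t - linInterp (fun r => u r t) x h ξ| ≤ Hx * h ^ (1 + α) :=
    fun t ht => abs_sub_linInterp_le_of_holder hα hh hxs (fun a ha => hux a ha t ht)
      (hHx t ht) hξ
  have errY : |u ξ η - linInterp (u ξ) y h η| ≤ Hy * h ^ (1 + α) :=
    abs_sub_linInterp_le_of_holder hα hh hys (huy ξ (hxs hξ)) (hHy ξ (hxs hξ)) hη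
  have hsplit : u ξ η - linInterp (fun t => linInterp (fun r => u r t) x h ξ) y h η
      = (u ξ η - linInterp (u ξ) y h η)
        + linInterp (fun t => u ξ t - linInterp (fun r => u r t) x h ξ) y h η := by
    simp only [linInterp]
    ring
  rw [hsplit, add_comm Hx, add_mul]
  refine (abs_add_le _ _).trans (add_le_add errY (abs_linInterp_le hh hη ?_ ?_))
  · exact errX y (hys ⟨le_rfl, by linarith⟩)
  · exact errX (y + h) (hys ⟨by linarith, le_rfl⟩)

section Grid

variable {a h η : ℝ} {N j : ℕ}

lemma hatFn_eq_zero {c : ℝ} (hh : 0 < h) (hc : h ≤ |η - c|) : hatFn h c η = 0 :=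
  max_eq_left <| sub_nonpos.2 <| (one_le_div hh).2 hc

lemma hatFn_eq_of_abs_le {c : ℝ} (hh : 0 < h) (hc : |η - c| ≤ h) :
    hatFn h c η = 1 - |η - c| / h :=
  max_eq_right <| sub_nonneg.2 <| (div_le_one hh).2 hc

lemma exists_mem_cell (hh : 0 < h) (hN : 1 ≤ N) (hη : η ∈ Icc a (a + N * h)) :
    ∃ j : ℕ, j + 1 ≤ N ∧ η ∈ Icc (a + j * h) (a + j * h + h) := by
  set t := (η - a) / h
  have ht0 : 0 ≤ t := div_nonneg (by linarith [hη.1]) hh.le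
  have htN : t ≤ N := (div_le_iff₀ hh).2 (by linarith [hη.2])
  -- the `min` only matters at the right end `η = a + N * h`, where `⌊t⌋₊ = N`
  refine ⟨min ⌊t⌋₊ (N - 1), by omega, ?_⟩
  have hjt : ((min ⌊t⌋₊ (N - 1) : ℕ) : ℝ) ≤ t :=
    (Nat.cast_le.2 (min_le_left _ _)).trans (Nat.floor_le ht0)
  have htj : t ≤ (min ⌊t⌋₊ (N - 1) : ℕ) + 1 := by
    rcases le_total ⌊t⌋₊ (N - 1) with hle | hle
    · rw [min_eq_left hle]
      exact (Nat.lt_floor_add_one t).le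
    · rw [min_eq_right hle, Nat.cast_sub hN, Nat.cast_one, sub_add_cancel]
      exact htN
  constructor
  · have := (le_div_iff₀ hh).1 hjt
    linarith
  · have := (div_le_iff₀ hh).1 htj
    linarith

lemma Icc_cell_subset_Icc (hh : 0 < h) (hj : j + 1 ≤ N) :
    Icc (a + j * h) (a + j * h + h) ⊆ Icc a (a + N * h) := by
  have hjN : ((j : ℝ) + 1) * h ≤ N * h := by gcongr; exact_mod_cast hj
  apply Icc_subset_Icc <;> nlinarith [Nat.cast_nonneg (α := ℝ) j]

/-- On a cell only the hat functions of its two end nodes are nonzero. -/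
lemma sum_mul_hatFn_eq_linInterp (f : ℝ → ℝ) (hh : 0 < h) (hj : j + 1 ≤ N)
    (hη : η ∈ Icc (a + j * h) (a + j * h + h)) :
    ∑ q ∈ Finset.range (N + 1), f (a + q * h) * hatFn h (a + q * h) η
      = linInterp f (a + j * h) h η := by
  rw [Finset.sum_eq_add_of_mem j (j + 1) (by simp; omega) (by simp; omega) (by omega)]
  · have hleft : |η - (a + j * h)| ≤ h := by
      rw [abs_le]; constructor <;> linarith [hη.1, hη.2]
    have hright : |η - (a + j * h + h)| ≤ h := by
      rw [abs_le]; constructor <;> linarith [hη.1, hη.2]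
    push_cast
    rw [add_one_mul, ← add_assoc, hatFn_eq_of_abs_le hh hleft, hatFn_eq_of_abs_le hh hright,
      abs_of_nonneg (by linarith [hη.1]), abs_of_nonpos (by linarith [hη.2]), linInterp]
    field_simp
    ring
  · rintro q - ⟨hqj, hqj1⟩
    rw [hatFn_eq_zero hh, mul_zero]
    rcases Nat.lt_or_gt_of_ne hqj with hlt | hgt
    · have : (q : ℝ) * h + h ≤ j * h := by
        rw [← add_one_mul]; gcongr; exact_mod_cast hlt
      rw [abs_of_nonneg (by linarith [hη.1])]
      linarith [hη.1]
    · have : (j : ℝ) * h + 2 * h ≤ q * h := by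
        rw [← add_mul]; gcongr; exact_mod_cast (by omega : j + 2 ≤ q)
      rw [abs_of_nonpos (by linarith [hη.2])]
      linarith [hη.2]

lemma interp2D_eq_linInterp_linInterp {u : ℝ → ℝ → ℝ} {L ξ : ℝ} {i : ℕ} (hh : 0 < h)
    (hi : i + 1 ≤ N) (hξ : ξ ∈ Icc (-L + i * h) (-L + i * h + h))
    (hj : j + 1 ≤ N) (hη : η ∈ Icc (-L + j * h) (-L + j * h + h)) :
    interp2D u L h N ξ η
      = linInterp (fun t => linInterp (fun r => u r t) (-L + i * h) h ξ) (-L + j * h) h η := by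
  calc interp2D u L h N ξ η
      = ∑ q ∈ Finset.range (N + 1), (∑ p ∈ Finset.range (N + 1),
          u (-L + p * h) (-L + q * h) * hatFn h (-L + p * h) ξ) * hatFn h (-L + q * h) η := by
        rw [interp2D, Finset.sum_comm]
        simp only [Finset.sum_mul]
    _ = ∑ q ∈ Finset.range (N + 1),
          linInterp (fun r => u r (-L + q * h)) (-L + i * h) h ξ * hatFn h (-L + q * h) η := by
        refine Finset.sum_congr rfl fun q _ => ?_
        rw [sum_mul_hatFn_eq_linInterp (fun r => u r (-L + q * h)) hh hi hξ]
    _ = _ :=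
        sum_mul_hatFn_eq_linInterp (fun t => linInterp (fun r => u r t) (-L + i * h) h ξ) hh hj hη

end Grid

/-- for α ∈ (0,1] there is C > 0 depending only on α such that for
any u that is C¹ on [-L,L]² with α-Hölder first partial derivatives (with sup
bounds Mu, Mx, My and Hölder constants Hx, Hy, whose sum plays the role of the
C^{1,α} norm), the piecewise-bilinear interpolant on the uniform grid with mesh
h = 2L/N satisfies the uniform error bound C h^{1+α} (Mu + Mx + My + Hx + Hy). -/
theorem stmt17 (α : ℝ) (hα : α ∈ Set.Ioc (0 : ℝ) 1) :
    ∃ C : ℝ, 0 < C ∧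
      ∀ L : ℝ, 0 < L → ∀ N : ℕ, 1 ≤ N →
      ∀ u ux uy : ℝ → ℝ → ℝ, ∀ Mu Mx My Hx Hy : ℝ,
      (∀ a ∈ Set.Icc (-L) L, ∀ b ∈ Set.Icc (-L) L,
        HasDerivWithinAt (fun t => u t b) (ux a b) (Set.Icc (-L) L) a) →
      (∀ a ∈ Set.Icc (-L) L, ∀ b ∈ Set.Icc (-L) L,
        HasDerivWithinAt (fun t => u a t) (uy a b) (Set.Icc (-L) L) b) →
      (∀ a ∈ Set.Icc (-L) L, ∀ b ∈ Set.Icc (-L) L, |u a b| ≤ Mu) →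
      (∀ a ∈ Set.Icc (-L) L, ∀ b ∈ Set.Icc (-L) L, |ux a b| ≤ Mx) →
      (∀ a ∈ Set.Icc (-L) L, ∀ b ∈ Set.Icc (-L) L, |uy a b| ≤ My) →
      (∀ a ∈ Set.Icc (-L) L, ∀ b ∈ Set.Icc (-L) L, ∀ a' ∈ Set.Icc (-L) L, ∀ b' ∈ Set.Icc (-L) L,
        |ux a b - ux a' b'| ≤ Hx * Real.sqrt ((a - a') ^ 2 + (b - b') ^ 2) ^ α) →
      (∀ a ∈ Set.Icc (-L) L, ∀ b ∈ Set.Icc (-L) L, ∀ a' ∈ Set.Icc (-L) L, ∀ b' ∈ Set.Icc (-L) L,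
        |uy a b - uy a' b'| ≤ Hy * Real.sqrt ((a - a') ^ 2 + (b - b') ^ 2) ^ α) →
      ∀ ξ ∈ Set.Icc (-L) L, ∀ η ∈ Set.Icc (-L) L,
        |u ξ η - interp2D u L (2 * L / N) N ξ η|
          ≤ C * (2 * L / N) ^ (1 + α) * (Mu + Mx + My + Hx + Hy) := by
  refine ⟨1, one_pos, fun L hL N hN u ux uy Mu Mx My Hx Hy hux huy hMu hMx hMy hHx hHy
    ξ hξ η hη => ?_⟩
  set h := 2 * L / N
  have hh : 0 < h := div_pos (by linarith) (by exact_mod_cast hN)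
  have hgrid : -L + N * h = L := by
    simp only [h]; field_simp; ring
  obtain ⟨i, hi, hξi⟩ := exists_mem_cell (a := -L) (η := ξ) hh hN (by rwa [hgrid])
  obtain ⟨j, hj, hηj⟩ := exists_mem_cell (a := -L) (η := η) hh hN (by rwa [hgrid])
  have herr := abs_sub_linInterp_linInterp_le hα.1.le hh
    ((Icc_cell_subset_Icc hh hi).trans_eq (by rw [hgrid]))
    ((Icc_cell_subset_Icc hh hj).trans_eq (by rw [hgrid])) hux huy
    (fun b hb a ha a' ha' => by simpa [Real.sqrt_sq_eq_abs] using hHx a ha b hb a' ha' b hb)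
    (fun a ha b hb b' hb' => by simpa [Real.sqrt_sq_eq_abs] using hHy a ha b hb a ha b' hb')
    hξi hηj
  have hcorner : -L ∈ Set.Icc (-L) L := ⟨le_rfl, by linarith⟩
  have hM : 0 ≤ Mu + Mx + My := by
    linarith [(abs_nonneg _).trans (hMu _ hcorner _ hcorner),
      (abs_nonneg _).trans (hMx _ hcorner _ hcorner),
      (abs_nonneg _).trans (hMy _ hcorner _ hcorner)]
  rw [interp2D_eq_linInterp_linInterp hh hi hξi hj hηj]
  calc _ ≤ (Hx + Hy) * h ^ (1 + α) := herr
    _ ≤ 1 * h ^ (1 + α) * (Mu + Mx + My + Hx + Hy) := by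
        nlinarith [Real.rpow_pos_of_pos hh (1 + α)]
end
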